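/- Let R_0, R_1, R_2 be contractions and ρ a density operator with Re Tr(R_0 R_1 ρ) ≥ 1 − O(ε) and Re Tr(R_1* R_2 ρ) ≥ 1 − O(ε). Then Re Tr(R_0 R_2 ρ) ≥ 1 − O(ε). -/

import Mathlib

/-!
Pair matrices through the state: `⟪X, Y⟫ = Tr(Xᴴ Y ρ)` is a positive semidefinite sesquilinear
form, and the three traces in question are `⟪R₀ᴴ, R₁⟫`, `⟪R₁, R₂⟫` and `⟪R₀ᴴ, R₂⟫`. Contractions,
and their adjoints by the C⋆-identity, lie in the unit ball of the associated seminorm because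
`Tr ρ = 1`. For unit-ball vectors, `Re ⟪a, b⟫ ≥ 1 - δ` forces `‖a - b‖² ≤ 2δ`, and expanding
`⟪a, c⟫ = ⟪a, b⟫ + ⟪b, c⟫ - ⟪b, b⟫ + ⟪a - b, c - b⟫` gives `Re ⟪a, c⟫ ≥ 1 - 4δ`, so `C₂ = 4 C₁`.
-/

open Matrix ComplexOrder

/-- A matrix is a contraction if `RᴴR ⪯ I`, i.e. its operator norm is at most `1`. -/
def IsContraction {n : ℕ} (R : Matrix (Fin n) (Fin n) ℂ) : Prop :=
  ((1 : Matrix (Fin n) (Fin n) ℂ) - Rᴴ * R).PosSemidef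

section InnerProductSpace

variable {𝕜 E : Type*} [RCLike 𝕜] [SeminormedAddCommGroup E] [InnerProductSpace 𝕜 E]

open RCLike

lemma norm_sub_sq_le_of_le_re_inner {a b : E} (ha : ‖a‖ ≤ 1) (hb : ‖b‖ ≤ 1) {δ : ℝ}
    (hab : 1 - δ ≤ re (inner 𝕜 a b)) : ‖a - b‖ ^ 2 ≤ 2 * δ := by
  rw [@norm_sub_sq 𝕜]
  nlinarith [norm_nonneg a, norm_nonneg b]

lemma one_sub_four_mul_le_re_inner_of_le_re_inner {a b c : E} (ha : ‖a‖ ≤ 1) (hb : ‖b‖ ≤ 1)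
    (hc : ‖c‖ ≤ 1) {δ : ℝ} (hab : 1 - δ ≤ re (inner 𝕜 a b)) (hbc : 1 - δ ≤ re (inner 𝕜 b c)) :
    1 - 4 * δ ≤ re (inner 𝕜 a c) := by
  have hsplit : inner 𝕜 a c = inner 𝕜 (a - b) (c - b) + inner 𝕜 a b + inner 𝕜 b c
      - inner 𝕜 b b := by
    simp only [inner_sub_left, inner_sub_right]
    ring
  have hcross : -(‖a - b‖ * ‖c - b‖) ≤ re (inner 𝕜 (a - b) (c - b)) :=
    neg_le_of_abs_le <| (abs_re_le_norm _).trans (norm_inner_le_norm _ _)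
  have hab' := norm_sub_sq_le_of_le_re_inner ha hb hab
  have hcb' := norm_sub_rev b c ▸ norm_sub_sq_le_of_le_re_inner hb hc hbc
  have hprod : ‖a - b‖ * ‖c - b‖ ≤ 2 * δ := by
    nlinarith [sq_nonneg (‖a - b‖ - ‖c - b‖)]
  have hbb : re (inner 𝕜 b b) ≤ 1 := by
    rw [inner_self_eq_norm_sq]
    nlinarith [norm_nonneg b]
  rw [hsplit, map_sub, map_add, map_add]
  linarith

end InnerProductSpace

namespace CStarAlgebra

variable {A : Type*} [CStarAlgebra A] [PartialOrder A] [StarOrderedRing A]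

lemma star_mul_self_le_one_iff {a : A} : star a * a ≤ 1 ↔ ‖a‖ ≤ 1 := by
  rw [← norm_le_one_iff_of_nonneg _ (star_mul_self_nonneg a), CStarRing.norm_star_mul_self,
    ← abs_le_one_iff_mul_self_le_one, abs_norm]

lemma mul_star_self_le_one_iff {a : A} : a * star a ≤ 1 ↔ ‖a‖ ≤ 1 := by
  simpa using star_mul_self_le_one_iff (a := star a)

end CStarAlgebra

open scoped MatrixOrder Matrix.Norms.L2Operator in
lemma IsContraction.conjTranspose {n : ℕ} {R : Matrix (Fin n) (Fin n) ℂ}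
    (hR : IsContraction R) : IsContraction Rᴴ := by
  change star (star R) * star R ≤ 1
  rw [star_star, CStarAlgebra.mul_star_self_le_one_iff, ← CStarAlgebra.star_mul_self_le_one_iff]
  exact hR

namespace Matrix

variable {n 𝕜 : Type*} [Fintype n] [RCLike 𝕜]

open scoped MatrixOrder in
lemma PosSemidef.trace_mul_nonneg {A B : Matrix n n 𝕜} (hA : A.PosSemidef)
    (hB : B.PosSemidef) : 0 ≤ (A * B).trace := by
  classical
  obtain ⟨D, rfl⟩ := CStarAlgebra.nonneg_iff_eq_star_mul_self.mp hA.nonneg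
  rw [mul_assoc, trace_mul_comm, star_eq_conjTranspose]
  exact (hB.mul_mul_conjTranspose_same D).trace_nonneg

lemma inner_toMatrixInnerProductSpace {ρ : Matrix n n 𝕜} (hρ : ρ.PosSemidef) (x y : Matrix n n 𝕜) :
    letI := ρ.toMatrixSeminormedAddCommGroup hρ
    letI := ρ.toMatrixInnerProductSpace hρ
    inner 𝕜 x y = (xᴴ * y * ρ).trace :=
  (trace_mul_comm (y * ρ) xᴴ).trans (by rw [mul_assoc])

lemma norm_toMatrixSeminormedAddCommGroup_le_one [DecidableEq n] {ρ : Matrix n n 𝕜}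
    (hρ : ρ.PosSemidef) (hρ1 : ρ.trace = 1)
    {x : Matrix n n 𝕜} (hx : (1 - xᴴ * x).PosSemidef) :
    letI := ρ.toMatrixSeminormedAddCommGroup hρ
    ‖x‖ ≤ 1 := by
  let := ρ.toMatrixSeminormedAddCommGroup hρ
  let := ρ.toMatrixInnerProductSpace hρ
  have hgap : RCLike.re (xᴴ * x * ρ).trace = 1 - RCLike.re ((1 - xᴴ * x) * ρ).trace := by
    rw [sub_mul, one_mul, trace_sub, map_sub, hρ1, RCLike.one_re]
    ring
  have hsq : ‖x‖ ^ 2 ≤ 1 := by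
    rw [← inner_self_eq_norm_sq (𝕜 := 𝕜), inner_toMatrixInnerProductSpace, hgap]
    linarith [(RCLike.nonneg_iff.mp (hx.trace_mul_nonneg hρ)).1]
  nlinarith [norm_nonneg x]

end Matrix

/-- Transitivity of approximate stabilization: if `Re Tr(R₀R₁ρ) ≥ 1 − O(ε)` and
`Re Tr(R₁*R₂ρ) ≥ 1 − O(ε)` for contractions, then `Re Tr(R₀R₂ρ) ≥ 1 − O(ε)`. -/
theorem approx_stab_trans :
    ∀ C₁ : ℝ, 0 < C₁ → ∃ C₂ : ℝ, 0 < C₂ ∧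
      ∀ (n : ℕ) (R0 R1 R2 ρ : Matrix (Fin n) (Fin n) ℂ) (ε : ℝ),
        IsContraction R0 → IsContraction R1 → IsContraction R2 →
        ρ.PosSemidef → ρ.trace = 1 → 0 ≤ ε →
        1 - C₁ * ε ≤ ((R0 * R1 * ρ).trace).re →
        1 - C₁ * ε ≤ ((R1ᴴ * R2 * ρ).trace).re →
        1 - C₂ * ε ≤ ((R0 * R2 * ρ).trace).re := by
  intro C₁ hC₁
  refine ⟨4 * C₁, by positivity, fun n R0 R1 R2 ρ ε h0 h1 h2 hρ hρ1 _ h01 h12 => ?_⟩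
  let := ρ.toMatrixSeminormedAddCommGroup hρ
  let := ρ.toMatrixInnerProductSpace hρ
  have hinner := inner_toMatrixInnerProductSpace hρ
  have hunit : ∀ {R}, IsContraction R → ‖R‖ ≤ 1 :=
    norm_toMatrixSeminormedAddCommGroup_le_one hρ hρ1
  have h02 := one_sub_four_mul_le_re_inner_of_le_re_inner (𝕜 := ℂ)
    (hunit h0.conjTranspose) (hunit h1) (hunit h2)
    (by rwa [hinner, conjTranspose_conjTranspose]) (by rwa [hinner])
  rw [hinner, conjTranspose_conjTranspose] at h02
  calc 1 - 4 * C₁ * ε = 1 - 4 * (C₁ * ε) := by ring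
    _ ≤ _ := h02
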